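/- Anti-windup finite-gain ℓ∞ stability of the saturated closed loop: Under the hypotheses of the augmented anti-windup closed loop (A, B, horizon T, delay τ, levels 0 = η_0 ≤ … ≤ η_N, each (R^i, M^i) satisfying the SLS feasibility conditions for (A,B), input-safety bound Σ_i (η_i − η_{i−1})‖[M^i_T ⋯ M^i_1]‖ ≤ u_max, plant x_t = A x_{t−1} + B P_{u_max}(u_{t−1}) + w_t with the augmented system-level controller, saturation projections), assume additionally ‖A^{τ+1}‖ < 1 for the induced ℓ∞→ℓ∞ matrix norm. Then for every disturbance w with sup_t |w_t| < ∞, the internal state satisfies sup_t |ŵ_t| ≤ (1/(1 − ‖A^{τ+1}‖))·sup_t |w_t|, and the state trajectory satisfies the affine bound sup_t |x_t| ≤ Σ_{i=1}^N (η_i − η_{i−1}) ‖[R^i_T ⋯ R^i_1]‖ + (Σ_{k=0}^{τ} ‖A^k‖)·(1/(1 − ‖A^{τ+1}‖))·sup_t |w_t|; in particular the saturated closed loop is finite-gain ℓ∞-stable with respect to w. -/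

import Mathlib

/-- Scalar saturation at level `η`: `sat(a,η) = sign(a)·min(|a|,η)`. -/
noncomputable def satScalar (η a : ℝ) : ℝ := Real.sign a * min |a| η

/-- Coordinatewise saturation projection (sup norm). -/
noncomputable def satProj {n : ℕ} (η : ℝ) (w : Fin n → ℝ) : Fin n → ℝ :=
  fun i => satScalar η (w i)

/-- Induced ℓ∞→ℓ∞ matrix norm (maximum absolute row sum). -/
noncomputable def linftyNorm {n m : ℕ} (A : Matrix (Fin n) (Fin m) ℝ) : ℝ :=
  ⨆ i : Fin n, ∑ j : Fin m, |A i j|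

/-- Induced ℓ∞→ℓ∞ norm (maximum absolute row sum) of the row-wise
concatenation `[M_T M_{T-1} ⋯ M_1]`. -/
noncomputable def concatNorm {p n : ℕ} (T : ℕ) (M : ℕ → Matrix (Fin p) (Fin n) ℝ) : ℝ :=
  ⨆ r : Fin p, ∑ k ∈ Finset.Icc 1 T, ∑ j : Fin n, |M k r j|

/-- SLS feasibility conditions for `(A, B)` with horizon `T`. -/
def SLSFeasible {n m : ℕ} (A : Matrix (Fin n) (Fin n) ℝ) (B : Matrix (Fin n) (Fin m) ℝ)
    (T : ℕ) (R : ℕ → Matrix (Fin n) (Fin n) ℝ) (M : ℕ → Matrix (Fin m) (Fin n) ℝ) : Prop :=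
  R 1 = 1 ∧
  (∀ k : ℕ, 1 ≤ k → k + 1 ≤ T → R (k + 1) = A * R k + B * M k) ∧
  A * R T + B * M T = 0

/-- The blended (input) component map. -/
noncomputable def blendOut {p n : ℕ} (Mm : ℕ → ℕ → Matrix (Fin p) (Fin n) ℝ)
    (η : ℕ → ℝ) (N T : ℕ) (h : ℕ → Fin n → ℝ) (t : ℕ) : Fin p → ℝ :=
  ∑ i ∈ Finset.Icc 1 N, ∑ k ∈ Finset.Icc 1 (min (t + 1) T),
    (Mm i k).mulVec (satProj (η i) (h (t + 1 - k)) - satProj (η (i - 1)) (h (t + 1 - k)))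

/-- The augmented (anti-windup) state component map. -/
noncomputable def augXmap {n : ℕ} (R : ℕ → ℕ → Matrix (Fin n) (Fin n) ℝ)
    (A : Matrix (Fin n) (Fin n) ℝ) (η : ℕ → ℝ) (N T τ : ℕ)
    (h : ℕ → Fin n → ℝ) (t : ℕ) : Fin n → ℝ :=
  blendOut R η N T h t +
  ∑ k ∈ Finset.Icc 1 (min (τ + 1) (t + 1)),
    (A ^ (k - 1)).mulVec (h (t + 1 - k) - satProj (η N) (h (t + 1 - k)))

/-!
Since `R^i_1 = I` and the saturation bands `P_{η_i} - P_{η_{i-1}}` telescope to `P_{η_N}`, the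
state is the system-level response to the internal state: `x_t = Ψxa_t(ŵ_{t:0})`. Each band has
sup norm at most `η_i - η_{i-1}`, so the input-safety bound keeps the input out of saturation, and
the SLS conditions then make `Ψxa` reproduce the plant's one-step evolution exactly, up to the part
of the state leaving the `A`-tail of length `τ + 1`:
`ŵ_{t+1} = w_{t+1} + A^{τ+1} (ŵ_{t-τ} - P_{η_N} ŵ_{t-τ})`.
As `|v - P_η v| ≤ |v|`, this is a delayed contraction with rate `‖A^{τ+1}‖ < 1`, which bounds `ŵ`;
the bound on `x` follows by estimating `Ψxa` term by term.
-/

open Finset Matrix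

lemma Real.sign_mul_abs_self (a : ℝ) : Real.sign a * |a| = a := by
  rcases lt_trichotomy a 0 with h | rfl | h
  · rw [Real.sign_of_neg h, abs_of_neg h]; ring
  · simp
  · rw [Real.sign_of_pos h, abs_of_pos h, one_mul]

lemma Real.abs_sign_mul_le (a b : ℝ) : |Real.sign a * b| ≤ |b| := by
  rcases Real.sign_apply_eq a with h | h | h <;> simp [h]

section Saturation

lemma satScalar_zero_left (a : ℝ) : satScalar 0 a = 0 := by
  simp [satScalar]

lemma satScalar_zero_right (η : ℝ) : satScalar η 0 = 0 := by
  simp [satScalar]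

lemma satScalar_of_abs_le {η a : ℝ} (h : |a| ≤ η) : satScalar η a = a := by
  rw [satScalar, min_eq_left h, Real.sign_mul_abs_self]

lemma abs_satScalar_sub_satScalar_le {η₁ η₂ : ℝ} (h : η₁ ≤ η₂) (a : ℝ) :
    |satScalar η₂ a - satScalar η₁ a| ≤ η₂ - η₁ := by
  calc |satScalar η₂ a - satScalar η₁ a| = |Real.sign a * (min |a| η₂ - min |a| η₁)| := by
        rw [satScalar, satScalar, mul_sub]
    _ ≤ |min |a| η₂ - min |a| η₁| := Real.abs_sign_mul_le _ _
    _ ≤ η₂ - η₁ := by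
        refine (abs_min_sub_min_le_max _ _ _ _).trans_eq ?_
        rw [sub_self, abs_zero, abs_of_nonneg (sub_nonneg.2 h), max_eq_right (sub_nonneg.2 h)]

lemma abs_sub_satScalar_le {η : ℝ} (hη : 0 ≤ η) (a : ℝ) : |a - satScalar η a| ≤ |a| := by
  calc |a - satScalar η a| = |Real.sign a * (|a| - min |a| η)| := by
        rw [satScalar, mul_sub, Real.sign_mul_abs_self]
    _ ≤ |(|a| - min |a| η)| := Real.abs_sign_mul_le _ _
    _ ≤ |a| := by
        rw [abs_of_nonneg (sub_nonneg.2 (min_le_left _ _))]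
        linarith [le_min (abs_nonneg a) hη]

variable {n : ℕ}

@[simp]
lemma satProj_zero_left (v : Fin n → ℝ) : satProj 0 v = 0 := by
  funext j; exact satScalar_zero_left _

@[simp]
lemma satProj_zero_right (η : ℝ) : satProj η (0 : Fin n → ℝ) = 0 := by
  funext j; exact satScalar_zero_right _

lemma satProj_of_norm_le {η : ℝ} {v : Fin n → ℝ} (h : ‖v‖ ≤ η) : satProj η v = v := by
  funext j
  exact satScalar_of_abs_le ((norm_le_pi_norm v j).trans h)

lemma norm_satProj_sub_satProj_le {η₁ η₂ : ℝ} (h : η₁ ≤ η₂) (v : Fin n → ℝ) :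
    ‖satProj η₂ v - satProj η₁ v‖ ≤ η₂ - η₁ :=
  (pi_norm_le_iff_of_nonneg (sub_nonneg.2 h)).2 fun j =>
    abs_satScalar_sub_satScalar_le h (v j)

lemma norm_sub_satProj_le {η : ℝ} (hη : 0 ≤ η) (v : Fin n → ℝ) :
    ‖v - satProj η v‖ ≤ ‖v‖ :=
  (pi_norm_le_iff_of_nonneg (norm_nonneg v)).2 fun j =>
    (abs_sub_satScalar_le hη (v j)).trans (norm_le_pi_norm v j)

end Saturation

section MatrixNorms

lemma abs_mulVec_apply_le {ι κ : Type*} [Fintype κ] (A : Matrix ι κ ℝ) (v : κ → ℝ) (r : ι) :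
    |(A *ᵥ v) r| ≤ (∑ j, |A r j|) * ‖v‖ := by
  rw [mulVec, dotProduct, sum_mul]
  refine (abs_sum_le_sum_abs _ _).trans (sum_le_sum fun j _ => ?_)
  rw [abs_mul]
  exact mul_le_mul_of_nonneg_left (norm_le_pi_norm v j) (abs_nonneg _)

variable {p q : ℕ}

lemma linftyNorm_nonneg (A : Matrix (Fin p) (Fin q) ℝ) : 0 ≤ linftyNorm A :=
  Real.iSup_nonneg fun _ => sum_nonneg fun _ _ => abs_nonneg _

lemma norm_mulVec_le_linftyNorm (A : Matrix (Fin p) (Fin q) ℝ) (v : Fin q → ℝ) :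
    ‖A *ᵥ v‖ ≤ linftyNorm A * ‖v‖ := by
  refine (pi_norm_le_iff_of_nonneg (mul_nonneg (linftyNorm_nonneg A) (norm_nonneg v))).2
    fun r => (abs_mulVec_apply_le A v r).trans (mul_le_mul_of_nonneg_right ?_ (norm_nonneg v))
  exact le_ciSup (f := fun i => ∑ j, |A i j|) (Set.finite_range _).bddAbove r

lemma norm_sum_mulVec_le_concatNorm {T : ℕ} {S : Finset ℕ} (hS : S ⊆ Icc 1 T)
    (M : ℕ → Matrix (Fin p) (Fin q) ℝ) (v : ℕ → Fin q → ℝ) {c : ℝ} (hc : 0 ≤ c)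
    (hv : ∀ k ∈ S, ‖v k‖ ≤ c) : ‖∑ k ∈ S, M k *ᵥ v k‖ ≤ c * concatNorm T M := by
  have hconcat : 0 ≤ concatNorm T M :=
    Real.iSup_nonneg fun _ => sum_nonneg fun _ _ => sum_nonneg fun _ _ => abs_nonneg _
  refine (pi_norm_le_iff_of_nonneg (mul_nonneg hc hconcat)).2 fun r => ?_
  rw [Real.norm_eq_abs, Finset.sum_apply]
  calc |∑ k ∈ S, (M k *ᵥ v k) r| ≤ ∑ k ∈ S, (∑ j, |M k r j|) * c :=
        (abs_sum_le_sum_abs _ _).trans <| sum_le_sum fun k hk =>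
          (abs_mulVec_apply_le _ _ r).trans
            (mul_le_mul_of_nonneg_left (hv k hk) (sum_nonneg fun _ _ => abs_nonneg _))
    _ ≤ ∑ k ∈ Icc 1 T, (∑ j, |M k r j|) * c :=
        sum_le_sum_of_subset_of_nonneg hS fun _ _ _ =>
          mul_nonneg (sum_nonneg fun _ _ => abs_nonneg _) hc
    _ ≤ c * concatNorm T M := by
        rw [← sum_mul, mul_comm]
        exact mul_le_mul_of_nonneg_left (le_ciSup (f := fun r => ∑ k ∈ Icc 1 T, ∑ j, |M k r j|)
          (Set.finite_range _).bddAbove r) hc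

end MatrixNorms

section Reindexing

variable {G : Type*} [AddCommMonoid G]

lemma sum_Icc_one_eq_add {K : ℕ} (hK : 1 ≤ K) (f : ℕ → G) :
    ∑ k ∈ Icc 1 K, f k = f 1 + ∑ k ∈ Icc 2 K, f k := by
  rw [← add_sum_Ioc_eq_sum_Icc hK, ← Icc_add_one_left_eq_Ioc]
  rfl

lemma sum_Icc_two_succ (L : ℕ) (f : ℕ → G) :
    ∑ k ∈ Icc 2 (L + 1), f k = ∑ k ∈ Icc 1 L, f (k + 1) := by
  rw [← map_add_right_Icc 1 L 1, sum_map]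
  rfl

lemma sum_Icc_update {α : Type*} {K t : ℕ} (hK : 1 ≤ K) (hKt : K ≤ t + 1)
    (f : ℕ → α → G) (h : ℕ → α) (a : α) :
    ∑ k ∈ Icc 1 K, f k (Function.update h t a (t + 1 - k)) =
      f 1 a + ∑ k ∈ Icc 2 K, f k (h (t + 1 - k)) := by
  rw [sum_Icc_one_eq_add hK, Nat.add_sub_cancel, Function.update_self]
  congr 1
  refine sum_congr rfl fun k hk => ?_
  rw [Function.update_of_ne (by grind)]

end Reindexing

lemma sum_mulVec_shift {ι κ : Type*} [Fintype ι] [Fintype κ]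
    (A : Matrix ι ι ℝ) (B : Matrix ι κ ℝ) {K : ℕ} (hK : 1 ≤ K)
    (Rs : ℕ → Matrix ι ι ℝ) (Ms : ℕ → Matrix κ ι ℝ)
    (hrec : ∀ k, 1 ≤ k → k + 1 ≤ K → Rs (k + 1) = A * Rs k + B * Ms k)
    (t : ℕ) (v : ℕ → ι → ℝ) :
    A *ᵥ (∑ k ∈ Icc 1 (min (t + 1) K), Rs k *ᵥ v (t + 1 - k)) +
        B *ᵥ (∑ k ∈ Icc 1 (min (t + 1) K), Ms k *ᵥ v (t + 1 - k)) =
      ∑ k ∈ Icc 2 (min (t + 1 + 1) K), Rs k *ᵥ v (t + 1 + 1 - k) +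
        if K ≤ t + 1 then (A * Rs K + B * Ms K) *ᵥ v (t + 1 - K) else 0 := by
  have hshift : ∀ L, L + 1 ≤ K →
      ∑ k ∈ Icc 1 L, (A * Rs k + B * Ms k) *ᵥ v (t + 1 - k) =
        ∑ k ∈ Icc 2 (L + 1), Rs k *ᵥ v (t + 1 + 1 - k) := by
    intro L hLK
    rw [sum_Icc_two_succ]
    refine sum_congr rfl fun k hk => ?_
    rw [mem_Icc] at hk
    rw [hrec k hk.1 (by omega), show t + 1 + 1 - (k + 1) = t + 1 - k by omega]
  simp only [mulVec_sum, mulVec_mulVec, ← sum_add_distrib, ← add_mulVec]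
  rcases le_or_gt K (t + 1) with hKt | hKt
  · obtain ⟨L, rfl⟩ : ∃ L, K = L + 1 := ⟨K - 1, by omega⟩
    rw [min_eq_right hKt, min_eq_right (by omega), if_pos hKt, sum_Icc_succ_top (by omega),
      hshift L le_rfl]
  · rw [min_eq_left hKt.le, min_eq_left (by omega), if_neg (by omega), add_zero,
      hshift (t + 1) hKt]

lemma sum_Icc_sub_pred {G : Type*} [AddCommGroup G] (f : ℕ → G) (N : ℕ) :
    ∑ i ∈ Icc 1 N, (f i - f (i - 1)) = f N - f 0 := by
  induction N with
  | zero => simp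
  | succ N ih => rw [sum_Icc_succ_top (by omega), ih, Nat.add_sub_cancel]; abel

section ClosedLoop

variable {n m N T τ : ℕ} (R : ℕ → ℕ → Matrix (Fin n) (Fin n) ℝ) (A : Matrix (Fin n) (Fin n) ℝ)
  (η : ℕ → ℝ)

lemma norm_blendOut_le {p : ℕ} (Mm : ℕ → ℕ → Matrix (Fin p) (Fin n) ℝ)
    (hη : MonotoneOn η (Set.Iic N)) (h : ℕ → Fin n → ℝ) (t : ℕ) :
    ‖blendOut Mm η N T h t‖ ≤ ∑ i ∈ Icc 1 N, (η i - η (i - 1)) * concatNorm T (Mm i) := by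
  refine (norm_sum_le _ _).trans (sum_le_sum fun i hi => ?_)
  rw [mem_Icc] at hi
  have hstep : η (i - 1) ≤ η i :=
    hη (Set.mem_Iic.2 (by omega)) (Set.mem_Iic.2 hi.2) (Nat.sub_le i 1)
  exact norm_sum_mulVec_le_concatNorm (Icc_subset_Icc_right (min_le_right _ _)) _ _
    (sub_nonneg.2 hstep) fun k _ => norm_satProj_sub_satProj_le hstep _

lemma norm_augXmap_le (hη : MonotoneOn η (Set.Iic N)) (hη0 : 0 ≤ η 0) {h : ℕ → Fin n → ℝ}
    {C : ℝ} (hC : ∀ s, ‖h s‖ ≤ C) (t : ℕ) :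
    ‖augXmap R A η N T τ h t‖ ≤ ∑ i ∈ Icc 1 N, (η i - η (i - 1)) * concatNorm T (R i) +
      (∑ k ∈ range (τ + 1), linftyNorm (A ^ k)) * C := by
  have hηN : 0 ≤ η N := hη0.trans (hη (Set.mem_Iic.2 N.zero_le) (Set.mem_Iic.2 le_rfl) N.zero_le)
  have hC0 : 0 ≤ C := (norm_nonneg _).trans (hC 0)
  refine (norm_add_le _ _).trans (add_le_add (norm_blendOut_le η R hη h t) ?_)
  calc ‖∑ k ∈ Icc 1 (min (τ + 1) (t + 1)),
          A ^ (k - 1) *ᵥ (h (t + 1 - k) - satProj (η N) (h (t + 1 - k)))‖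
      ≤ ∑ k ∈ Icc 1 (min (τ + 1) (t + 1)), linftyNorm (A ^ (k - 1)) * C :=
        (norm_sum_le _ _).trans <| sum_le_sum fun k _ => (norm_mulVec_le_linftyNorm _ _).trans <|
          mul_le_mul_of_nonneg_left ((norm_sub_satProj_le hηN _).trans (hC _))
            (linftyNorm_nonneg _)
    _ ≤ ∑ k ∈ Icc 1 (τ + 1), linftyNorm (A ^ (k - 1)) * C :=
        sum_le_sum_of_subset_of_nonneg (Icc_subset_Icc_right (min_le_left _ _)) fun _ _ _ =>
          mul_nonneg (linftyNorm_nonneg _) hC0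
    _ = (∑ k ∈ range (τ + 1), linftyNorm (A ^ k)) * C := by
        rw [sum_mul]
        exact sum_nbij' (· - 1) (· + 1) (by simp) (by simp) (by simp; omega) (by simp)
          (by simp)

lemma augXmap_update_zero (h : ℕ → Fin n → ℝ) :
    augXmap R A η N T τ (Function.update h 0 0) 0 = 0 := by
  have hzero : ∀ k ∈ Icc 1 (min (τ + 1) (0 + 1)) ∪ Icc 1 (min (0 + 1) T),
      Function.update h 0 0 (0 + 1 - k) = 0 := fun k hk => by
    rw [show 0 + 1 - k = 0 by simp at hk; omega, Function.update_self]
  simp only [augXmap, blendOut]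
  rw [sum_eq_zero fun i _ => sum_eq_zero fun k hk => ?_, sum_eq_zero fun k hk => ?_, add_zero]
  · rw [hzero k (mem_union_left _ hk)]; simp
  · rw [hzero k (mem_union_right _ hk)]; simp

lemma augXmap_eq_add_update (hT : 1 ≤ T) (hR1 : ∀ i ∈ Icc 1 N, R i 1 = 1) (hη0 : η 0 = 0)
    (h : ℕ → Fin n → ℝ) (t : ℕ) :
    augXmap R A η N T τ h t = h t + augXmap R A η N T τ (Function.update h t 0) t := by
  have hblend : blendOut R η N T h t =
      satProj (η N) (h t) + blendOut R η N T (Function.update h t 0) t := by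
    have htelescope : satProj (η N) (h t) =
        ∑ i ∈ Icc 1 N, (satProj (η i) (h t) - satProj (η (i - 1)) (h t)) := by
      rw [sum_Icc_sub_pred (fun i => satProj (η i) (h t)), hη0, satProj_zero_left, sub_zero]
    rw [htelescope, blendOut, blendOut, ← sum_add_distrib]
    refine sum_congr rfl fun i hi => ?_
    rw [sum_Icc_update (f := fun k v => R i k *ᵥ (satProj (η i) v - satProj (η (i - 1)) v))
      (by omega) (min_le_left _ _), sum_Icc_one_eq_add (by omega)]
    simp [hR1 i hi]
  have htail : ∑ k ∈ Icc 1 (min (τ + 1) (t + 1)),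
      A ^ (k - 1) *ᵥ (h (t + 1 - k) - satProj (η N) (h (t + 1 - k))) =
      h t - satProj (η N) (h t) + ∑ k ∈ Icc 1 (min (τ + 1) (t + 1)),
        A ^ (k - 1) *ᵥ (Function.update h t 0 (t + 1 - k) -
          satProj (η N) (Function.update h t 0 (t + 1 - k))) := by
    rw [sum_Icc_update (f := fun k v => A ^ (k - 1) *ᵥ (v - satProj (η N) v))
      (by omega) (min_le_right _ _), sum_Icc_one_eq_add (by omega)]
    simp
  rw [augXmap, augXmap, hblend, htail]
  abel

lemma augXmap_update_succ (B : Matrix (Fin n) (Fin m) ℝ) (M : ℕ → ℕ → Matrix (Fin m) (Fin n) ℝ)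
    (hT : 1 ≤ T) (hSLS : ∀ i ∈ Icc 1 N, SLSFeasible A B T (R i) (M i))
    (h : ℕ → Fin n → ℝ) (t : ℕ) :
    augXmap R A η N T τ (Function.update h (t + 1) 0) (t + 1) =
      A *ᵥ augXmap R A η N T τ h t + B *ᵥ blendOut M η N T h t -
        if τ ≤ t then A ^ (τ + 1) *ᵥ (h (t - τ) - satProj (η N) (h (t - τ))) else 0 := by
  have hblend : blendOut R η N T (Function.update h (t + 1) 0) (t + 1) =
      A *ᵥ blendOut R η N T h t + B *ᵥ blendOut M η N T h t := by
    rw [blendOut, blendOut, blendOut, mulVec_sum, mulVec_sum, ← sum_add_distrib]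
    refine sum_congr rfl fun i hi => ?_
    obtain ⟨-, hmid, hlast⟩ := hSLS i hi
    rw [sum_Icc_update (f := fun k v => R i k *ᵥ (satProj (η i) v - satProj (η (i - 1)) v))
      (by omega) (min_le_left _ _), sum_mulVec_shift A B hT (R i) (M i) hmid t
        (fun s => satProj (η i) (h s) - satProj (η (i - 1)) (h s)), hlast]
    simp
  have htail : ∑ k ∈ Icc 1 (min (τ + 1) (t + 1 + 1)),
      A ^ (k - 1) *ᵥ (Function.update h (t + 1) 0 (t + 1 + 1 - k) -
        satProj (η N) (Function.update h (t + 1) 0 (t + 1 + 1 - k))) =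
      A *ᵥ (∑ k ∈ Icc 1 (min (τ + 1) (t + 1)),
        A ^ (k - 1) *ᵥ (h (t + 1 - k) - satProj (η N) (h (t + 1 - k)))) -
        if τ ≤ t then A ^ (τ + 1) *ᵥ (h (t - τ) - satProj (η N) (h (t - τ))) else 0 := by
    have hpow : ∀ k, 1 ≤ k → k + 1 ≤ τ + 1 →
        A ^ (k + 1 - 1) = A * A ^ (k - 1) + (0 : Matrix (Fin n) (Fin n) ℝ) * 0 := by
      intro k hk _
      rw [zero_mul, add_zero, ← pow_succ', Nat.sub_add_cancel hk, Nat.add_sub_cancel]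
    have hshift := sum_mulVec_shift A 0 (K := τ + 1) (by omega) (fun k => A ^ (k - 1))
      (fun _ => 0) hpow t (fun s => h s - satProj (η N) (h s))
    rw [sum_Icc_update (f := fun k v => A ^ (k - 1) *ᵥ (v - satProj (η N) v)) (by omega)
      (min_le_right _ _), min_comm, min_comm (τ + 1), eq_sub_iff_add_eq]
    simp only [zero_mulVec, add_zero, mul_zero, Nat.add_sub_cancel, Nat.add_le_add_iff_right,
      Nat.add_sub_add_right, ← pow_succ'] at hshift
    rw [hshift]
    simp
  rw [augXmap, augXmap, hblend, htail, mulVec_add]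
  abel

end ClosedLoop

lemma le_of_delayed_contraction {a : ℕ → ℝ} {ρ W : ℝ} (τ : ℕ) (hρ0 : 0 ≤ ρ) (hρ1 : ρ < 1)
    (hW : 0 ≤ W) (h0 : a 0 ≤ W) (hstep : ∀ t, a (t + 1) ≤ W + ρ * a (t - τ)) (t : ℕ) :
    a t ≤ 1 / (1 - ρ) * W := by
  have hfix : W + ρ * (1 / (1 - ρ) * W) = 1 / (1 - ρ) * W := by
    field_simp [(sub_pos.2 hρ1).ne']
    ring
  have hWle : W ≤ 1 / (1 - ρ) * W :=
    le_mul_of_one_le_left hW (by rw [le_div_iff₀ (sub_pos.2 hρ1)]; linarith)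
  induction t using Nat.strong_induction_on with
  | _ t ih =>
    rcases t with _ | t
    · exact h0.trans hWle
    · calc a (t + 1) ≤ W + ρ * a (t - τ) := hstep t
        _ ≤ W + ρ * (1 / (1 - ρ) * W) := by gcongr; exact ih _ (by omega)
        _ = 1 / (1 - ρ) * W := hfix

lemma norm_le_of_antiwindup_recursion {n τ : ℕ} {A : Matrix (Fin n) (Fin n) ℝ} {ηN W : ℝ}
    {v w : ℕ → Fin n → ℝ} (hηN : 0 ≤ ηN) (hA : linftyNorm (A ^ (τ + 1)) < 1)
    (hW : ∀ s, ‖w s‖ ≤ W) (h0 : v 0 = w 0)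
    (hrec : ∀ t, v (t + 1) = w (t + 1) +
      if τ ≤ t then A ^ (τ + 1) *ᵥ (v (t - τ) - satProj ηN (v (t - τ))) else 0) (t : ℕ) :
    ‖v t‖ ≤ 1 / (1 - linftyNorm (A ^ (τ + 1))) * W := by
  have hρ0 := linftyNorm_nonneg (A ^ (τ + 1))
  refine le_of_delayed_contraction (a := fun s => ‖v s‖) τ hρ0 hA ((norm_nonneg _).trans (hW 0))
    (h0 ▸ hW 0) (fun t => ?_) t
  rw [hrec t]
  split_ifs
  · exact (norm_add_le _ _).trans (add_le_add (hW _) ((norm_mulVec_le_linftyNorm _ _).trans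
      (mul_le_mul_of_nonneg_left (norm_sub_satProj_le hηN _) hρ0)))
  · rw [add_zero]
    exact (hW _).trans (le_add_of_nonneg_right (mul_nonneg hρ0 (norm_nonneg _)))

theorem antiwindup_finite_gain_stability_general (n m T N τ : ℕ) (hT : 1 ≤ T)
    (A : Matrix (Fin n) (Fin n) ℝ) (B : Matrix (Fin n) (Fin m) ℝ)
    (η : ℕ → ℝ) (hη0 : η 0 = 0) (hmono : ∀ i : ℕ, i < N → η i ≤ η (i + 1))
    (R : ℕ → ℕ → Matrix (Fin n) (Fin n) ℝ) (M : ℕ → ℕ → Matrix (Fin m) (Fin n) ℝ)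
    (hSLS : ∀ i ∈ Finset.Icc 1 N, SLSFeasible A B T (R i) (M i))
    (umax : ℝ)
    (hsafe : ∑ i ∈ Finset.Icc 1 N, (η i - η (i - 1)) * concatNorm T (M i) ≤ umax)
    (hA : linftyNorm (A ^ (τ + 1)) < 1)
    (w x wHat : ℕ → Fin n → ℝ) (u : ℕ → Fin m → ℝ)
    (hx0 : x 0 = w 0)
    (hx : ∀ t : ℕ, 1 ≤ t →
      x t = A.mulVec (x (t - 1)) + B.mulVec (satProj umax (u (t - 1))) + w t)
    (hu : ∀ t : ℕ, u t = blendOut M η N T wHat t)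
    (hwh0 : wHat 0 = x 0)
    (hwh : ∀ t : ℕ, wHat (t + 1) = x (t + 1) -
      augXmap R A η N T τ (fun j => if j = t + 1 then 0 else wHat j) (t + 1))
    (hbdd : BddAbove (Set.range fun t => ‖w t‖)) :
    (∀ t : ℕ, ‖wHat t‖ ≤
      (1 / (1 - linftyNorm (A ^ (τ + 1)))) * ⨆ s : ℕ, ‖w s‖) ∧
    (∀ t : ℕ, ‖x t‖ ≤
      (∑ i ∈ Finset.Icc 1 N, (η i - η (i - 1)) * concatNorm T (R i)) +
      (∑ k ∈ Finset.range (τ + 1), linftyNorm (A ^ k)) *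
        ((1 / (1 - linftyNorm (A ^ (τ + 1)))) * ⨆ s : ℕ, ‖w s‖)) := by
  have hη : MonotoneOn η (Set.Iic N) :=
    monotoneOn_of_le_succ Set.ordConnected_Iic fun i _ _ hi => by
      simpa using hmono i (by simpa using hi)
  have hηN : 0 ≤ η N := hη0.ge.trans (hη (Set.mem_Iic.2 N.zero_le) (Set.mem_Iic.2 le_rfl) N.zero_le)
  have hmask : ∀ t, Function.update wHat t 0 = fun j => if j = t then 0 else wHat j :=
    fun t => funext fun j => Function.update_apply wHat t 0 j
  have hsat : ∀ t, satProj umax (u t) = u t := fun t =>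
    satProj_of_norm_le (by rw [hu t]; exact (norm_blendOut_le η M hη wHat t).trans hsafe)
  have hstate : ∀ t, x t = augXmap R A η N T τ wHat t := by
    intro t
    rw [augXmap_eq_add_update R A η hT (fun i hi => (hSLS i hi).1) hη0]
    rcases t with _ | t
    · rw [augXmap_update_zero, add_zero, hwh0]
    · rw [hwh t, hmask]
      abel
  have hrec : ∀ t, wHat (t + 1) = w (t + 1) +
      if τ ≤ t then A ^ (τ + 1) *ᵥ (wHat (t - τ) - satProj (η N) (wHat (t - τ))) else 0 := by
    intro t
    rw [hwh t, ← hmask, augXmap_update_succ R A η B M hT hSLS, hx (t + 1) (by omega),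
      Nat.add_sub_cancel, hsat, ← hu, hstate t]
    abel
  have hwHat : ∀ t, ‖wHat t‖ ≤ 1 / (1 - linftyNorm (A ^ (τ + 1))) * ⨆ s, ‖w s‖ :=
    norm_le_of_antiwindup_recursion hηN hA (le_ciSup hbdd) (hwh0.trans hx0) hrec
  exact ⟨hwHat, fun t => hstate t ▸ norm_augXmap_le R A η hη hη0.ge hwHat t⟩

/-- Anti-windup finite-gain ℓ∞ stability of the saturated closed
loop. Under the hypotheses of the augmented anti-windup closed loop and
`‖A^{τ+1}‖ < 1`, for every bounded disturbance `w` the internal state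
satisfies `sup_t ‖ŵ_t‖ ≤ (1/(1 − ‖A^{τ+1}‖))·sup_t ‖w_t‖` and the state
satisfies the affine bound
`sup_t ‖x_t‖ ≤ Σ_{i=1}^N (η_i − η_{i−1})‖[Rⁱ_T ⋯ Rⁱ_1]‖
  + (Σ_{k=0}^τ ‖A^k‖)·(1/(1 − ‖A^{τ+1}‖))·sup_t ‖w_t‖`. -/
theorem antiwindup_finite_gain_stability (n m T N τ : ℕ) (hT : 1 ≤ T) (hN : 1 ≤ N)
    (A : Matrix (Fin n) (Fin n) ℝ) (B : Matrix (Fin n) (Fin m) ℝ)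
    (η : ℕ → ℝ) (hη0 : η 0 = 0) (hmono : ∀ i : ℕ, i < N → η i ≤ η (i + 1))
    (R : ℕ → ℕ → Matrix (Fin n) (Fin n) ℝ) (M : ℕ → ℕ → Matrix (Fin m) (Fin n) ℝ)
    (hSLS : ∀ i ∈ Finset.Icc 1 N, SLSFeasible A B T (R i) (M i))
    (umax : ℝ)
    (hsafe : ∑ i ∈ Finset.Icc 1 N, (η i - η (i - 1)) * concatNorm T (M i) ≤ umax)
    (hA : linftyNorm (A ^ (τ + 1)) < 1)
    (w x wHat : ℕ → Fin n → ℝ) (u : ℕ → Fin m → ℝ)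
    (hx0 : x 0 = w 0)
    (hx : ∀ t : ℕ, 1 ≤ t →
      x t = A.mulVec (x (t - 1)) + B.mulVec (satProj umax (u (t - 1))) + w t)
    (hu : ∀ t : ℕ, u t = blendOut M η N T wHat t)
    (hwh0 : wHat 0 = x 0)
    (hwh : ∀ t : ℕ, wHat (t + 1) = x (t + 1) -
      augXmap R A η N T τ (fun j => if j = t + 1 then 0 else wHat j) (t + 1))
    (hbdd : BddAbove (Set.range fun t => ‖w t‖)) :
    (∀ t : ℕ, ‖wHat t‖ ≤
      (1 / (1 - linftyNorm (A ^ (τ + 1)))) * ⨆ s : ℕ, ‖w s‖) ∧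
    (∀ t : ℕ, ‖x t‖ ≤
      (∑ i ∈ Finset.Icc 1 N, (η i - η (i - 1)) * concatNorm T (R i)) +
      (∑ k ∈ Finset.range (τ + 1), linftyNorm (A ^ k)) *
        ((1 / (1 - linftyNorm (A ^ (τ + 1)))) * ⨆ s : ℕ, ‖w s‖)) :=
  antiwindup_finite_gain_stability_general n m T N τ hT A B η hη0 hmono R M hSLS umax hsafe hA w x
    wHat u hx0 hx hu hwh0 hwh hbdd
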